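/- arXiv:1110.6899 — 2 statements merged into one kernel-verified Lean document; each statement's English description precedes it below -/
import Mathlib

section
/- The set of functions f : Σ → ℂ* that admit a ℤ/2-equivariant logarithm (i.e. f = exp(g) with g ∘ c = conj(g)) is exactly the connected component of the constant function 1 in the space of ℤ/2-equivariant smooth maps from Σ to ℂ*. -/
/-!
If `g` is an equivariant logarithm of `f`, the path `t ↦ exp (t g)` of equivariant maps joins
`1` to `f`. Conversely, having an equivariant logarithm is a locally constant property: if `f`
is close to a nonvanishing `f₀`, in the sense `‖f x - f₀ x‖ < ‖f₀ x‖` for all `x`, then `f / f₀`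
takes values in the right half-plane, where the principal logarithm is continuous and commutes
with conjugation, so `f` and `f₀` differ by a factor with an equivariant logarithm. Hence the
property is constant on the connected component of `1`.
-/

open ComplexConjugate Topology

section

variable {S : Type*} [TopologicalSpace S]

def HasRealLog (c : S → S) (f : S → ℂ) : Prop :=
  ∃ g : C(S, ℂ), (∀ x, conj (g (c x)) = g x) ∧ ∀ x, Complex.exp (g x) = f x

namespace HasRealLog

variable {c : S → S} {f u : S → ℂ}

theorem mul (hf : HasRealLog c f) (hu : HasRealLog c u) : HasRealLog c (f * u) := by
  obtain ⟨g, hgc, hge⟩ := hf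
  obtain ⟨h, hhc, hhe⟩ := hu
  refine ⟨g + h, fun x => ?_, fun x => ?_⟩
  · simp only [ContinuousMap.add_apply, map_add, hgc, hhc]
  · simp only [ContinuousMap.add_apply, Complex.exp_add, hge, hhe, Pi.mul_apply]

theorem div (hf : HasRealLog c f) (hu : HasRealLog c u) : HasRealLog c (f / u) := by
  obtain ⟨g, hgc, hge⟩ := hf
  obtain ⟨h, hhc, hhe⟩ := hu
  refine ⟨g - h, fun x => ?_, fun x => ?_⟩
  · simp only [ContinuousMap.sub_apply, map_sub, hgc, hhc]
  · simp only [ContinuousMap.sub_apply, Complex.exp_sub, hge, hhe, Pi.div_apply]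

end HasRealLog

theorem hasRealLog_of_re_pos {c : S → S} {u : S → ℂ} (hu : Continuous u)
    (hre : ∀ x, 0 < (u x).re) (hconj : ∀ x, conj (u (c x)) = u x) : HasRealLog c u := by
  have hslit : ∀ x, u x ∈ Complex.slitPlane := fun x => Or.inl (hre x)
  refine ⟨⟨fun x => Complex.log (u x), hu.clog hslit⟩, fun x => ?_, fun x => ?_⟩
  · have harg : (u (c x)).arg ≠ Real.pi := Complex.slitPlane_arg_ne_pi (hslit (c x))
    simp only [ContinuousMap.coe_mk]
    rw [← Complex.log_conj _ harg, hconj]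
  · exact Complex.exp_log (Complex.slitPlane_ne_zero (hslit x))

theorem Complex.re_div_pos_of_norm_sub_lt {z w : ℂ} (h : ‖z - w‖ < ‖w‖) : 0 < (z / w).re := by
  have hw : w ≠ 0 := norm_pos_iff.mp ((norm_nonneg _).trans_lt h)
  have hsplit : z / w = 1 + (z - w) / w := by field_simp; ring
  have hsmall : ‖(z - w) / w‖ < 1 := by
    rwa [norm_div, div_lt_one (norm_pos_iff.mpr hw)]
  rw [hsplit, Complex.add_re, Complex.one_re]
  linarith [neg_abs_le ((z - w) / w).re, Complex.abs_re_le_norm ((z - w) / w)]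

theorem hasRealLog_iff_of_norm_sub_lt {c : S → S} {f f₀ : C(S, ℂ)}
    (hfc : ∀ x, conj (f (c x)) = f x) (hf₀c : ∀ x, conj (f₀ (c x)) = f₀ x)
    (hclose : ∀ x, ‖f x - f₀ x‖ < ‖f₀ x‖) : HasRealLog c f ↔ HasRealLog c f₀ := by
  have hf₀ : ∀ x, f₀ x ≠ 0 := fun x => norm_pos_iff.mp ((norm_nonneg _).trans_lt (hclose x))
  have hre : ∀ x, 0 < (f x / f₀ x).re := fun x => Complex.re_div_pos_of_norm_sub_lt (hclose x)
  have hf : ∀ x, f x ≠ 0 := fun x hx => by simpa [hx] using hre x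
  have hquot : HasRealLog c (f / f₀ : S → ℂ) :=
    hasRealLog_of_re_pos (f.continuous.div f₀.continuous hf₀) hre
      fun x => by simp only [Pi.div_apply, map_div₀, hfc, hf₀c]
  constructor
  · intro hlog
    convert hlog.div hquot using 1
    funext x
    simp [div_div_cancel₀ (hf x)]
  · intro hlog
    convert hlog.mul hquot using 1
    funext x
    simp [mul_div_cancel₀ _ (hf₀ x)]

theorem ContinuousMap.eventually_norm_sub_lt [CompactSpace S] {E : Type*}
    [NormedAddCommGroup E] {f₀ : C(S, E)}
    (hf₀ : ∀ x, f₀ x ≠ 0) : ∀ᶠ f in 𝓝 f₀, ∀ x, ‖f x - f₀ x‖ < ‖f₀ x‖ := by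
  cases isEmpty_or_nonempty S
  · exact .of_forall fun _ x => isEmptyElim x
  obtain ⟨x₀, -, hmin⟩ := isCompact_univ.exists_isMinOn Set.univ_nonempty
    (continuous_norm.comp f₀.continuous).continuousOn
  filter_upwards [Metric.ball_mem_nhds f₀ (norm_pos_iff.mpr (hf₀ x₀))] with f hf x
  calc ‖f x - f₀ x‖ = dist (f x) (f₀ x) := (dist_eq_norm _ _).symm
    _ ≤ dist f f₀ := ContinuousMap.dist_apply_le_dist x
    _ < ‖f₀ x₀‖ := hf
    _ ≤ ‖f₀ x‖ := hmin (Set.mem_univ x)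

section RealUnits

variable (c : S → S)

abbrev RealUnitMap : Type _ :=
  {f : C(S, ℂ) // (∀ x, f x ≠ 0) ∧ ∀ x, conj (f (c x)) = f x}

theorem isLocallyConstant_hasRealLog [CompactSpace S] :
    IsLocallyConstant fun f : RealUnitMap c => HasRealLog c f.1 := by
  refine (IsLocallyConstant.iff_eventually_eq _).2 fun f₀ => ?_
  filter_upwards [continuous_subtype_val.continuousAt.eventually
    (ContinuousMap.eventually_norm_sub_lt f₀.2.1)] with f hclose
  exact propext (hasRealLog_iff_of_norm_sub_lt f.2.2 f₀.2.2 hclose)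

noncomputable def RealUnitMap.one : RealUnitMap c :=
  ⟨ContinuousMap.const S 1, fun _ => one_ne_zero, fun _ => by simp⟩

variable {c}

theorem mem_connectedComponent_one_of_hasRealLog {f : RealUnitMap c} (hf : HasRealLog c f.1) :
    f ∈ connectedComponent (RealUnitMap.one c) := by
  obtain ⟨g, hgc, hge⟩ := hf
  let γ : C(ℝ, C(S, ℂ)) :=
    ContinuousMap.curry ⟨fun p : ℝ × S => Complex.exp (p.1 * g p.2), by fun_prop⟩
  let Γ : ℝ → RealUnitMap c := fun t =>
    ⟨γ t, fun x => Complex.exp_ne_zero _, fun x => by simp [γ, ← Complex.exp_conj, hgc]⟩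
  have h0 : Γ 0 = RealUnitMap.one c := Subtype.ext (ContinuousMap.ext fun x => by
    simp [Γ, γ, RealUnitMap.one])
  have h1 : Γ 1 = f := Subtype.ext (ContinuousMap.ext fun x => by simp [Γ, γ, hge])
  exact (isConnected_range (γ.continuous.subtype_mk _ : Continuous Γ)).isPreconnected
    |>.subset_connectedComponent ⟨0, h0⟩ ⟨1, h1⟩

variable (c)

theorem connectedComponent_realUnitMap_one [CompactSpace S] :
    connectedComponent (RealUnitMap.one c) = {f | HasRealLog c f.1} := by
  refine Set.Subset.antisymm (fun f hf => ?_) fun f hf =>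
    mem_connectedComponent_one_of_hasRealLog hf
  have hone : HasRealLog c (RealUnitMap.one c).1 := ⟨0, fun x => by simp, fun x => by
    simp [RealUnitMap.one]⟩
  exact Eq.mp ((isLocallyConstant_hasRealLog c).apply_eq_of_isPreconnected
    isPreconnected_connectedComponent mem_connectedComponent hf) hone

end RealUnits

end

theorem stmt_0 (S : Type*) [TopologicalSpace S] [CompactSpace S]
    (c : S → S) :
    {f : {f : C(S, ℂ) // (∀ x, f x ≠ 0) ∧ ∀ x, (starRingEnd ℂ) (f (c x)) = f x} |
        ∃ g : C(S, ℂ), (∀ x, (starRingEnd ℂ) (g (c x)) = g x) ∧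
          ∀ x, Complex.exp (g x) = f.1 x}
      = connectedComponent
          ⟨ContinuousMap.const S 1, fun _ => one_ne_zero, fun _ => by simp⟩ :=
  (connectedComponent_realUnitMap_one c).symm
end

section
/- Under the translation action of the group of homotopy classes of equivariant maps f : (Σ_g,c_Σ) → (ℂ*,conj) on real Spin structures via the mod-2 index, the Arf invariant changes by arf(f·q) = arf(q) + q((f_*)^PD), where (f_*)^PD is the Poincaré dual of the mod-2 index class of f; in particular arf(f·q) − arf(q) depends only on f and the first Stiefel-Whitney class of q, not on q itself. -/
/-!
On an isotropic subspace the defect `ω x y` of a quadratic refinement `q` vanishes, so `q` is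
linear there. On the Lagrangian spanned by the `aᵢ` it is therefore the linear form
`v ↦ ∑ᵢ q(aᵢ) ω(v, bᵢ)`, since both agree on the `aᵢ`. Translating `q` by `ω v` with `v` in that
Lagrangian leaves every `q(aᵢ)` unchanged and adds `ω(v, bᵢ)` to `q(bᵢ)`, so the Arf sum changes
by exactly `∑ᵢ q(aᵢ) ω(v, bᵢ) = q v`. Changing `q` by `ω w` with `w` in the Lagrangian does not
change `q v`, whence the independence statement.
-/

open Finset

section

variable {V : Type*} [AddCommGroup V] [Module (ZMod 2) V]

def IsQuadraticRefinement (ω : V →ₗ[ZMod 2] V →ₗ[ZMod 2] ZMod 2) (q : V → ZMod 2) : Prop :=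
  ∀ x y, q (x + y) = q x + q y + ω x y

def arfSum {ι : Type*} [Fintype ι] (a b : ι → V) (q : V → ZMod 2) : ZMod 2 :=
  ∑ i, q (a i) * q (b i)

namespace IsQuadraticRefinement

variable {ω : V →ₗ[ZMod 2] V →ₗ[ZMod 2] ZMod 2} {q : V → ZMod 2}

theorem map_zero (hq : IsQuadraticRefinement ω q) : q 0 = 0 := by
  simpa using hq 0 0

theorem map_add_of_isotropic (hq : IsQuadraticRefinement ω q) {x y : V} (hxy : ω x y = 0) :
    q (x + y) = q x + q y := by
  rw [hq x y, hxy, add_zero]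

theorem map_smul (hq : IsQuadraticRefinement ω q) (c : ZMod 2) (x : V) : q (c • x) = c * q x := by
  obtain rfl | rfl : c = 0 ∨ c = 1 := by fin_cases c; exacts [.inl rfl, .inr rfl]
  · rw [zero_smul, zero_mul, hq.map_zero]
  · rw [one_smul, one_mul]

theorem eq_of_mem_span {s : Set V}
    (hiso : ∀ x ∈ Submodule.span (ZMod 2) s, ∀ y ∈ Submodule.span (ZMod 2) s, ω x y = 0)
    (hq : IsQuadraticRefinement ω q) (L : V →ₗ[ZMod 2] ZMod 2) (hL : ∀ x ∈ s, q x = L x) :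
    ∀ v ∈ Submodule.span (ZMod 2) s, q v = L v := by
  intro v hv
  induction hv using Submodule.span_induction with
  | mem x hx => exact hL x hx
  | zero => rw [hq.map_zero, L.map_zero]
  | add x y hx hy ihx ihy =>
    rw [hq.map_add_of_isotropic (hiso x hx y hy), ihx, ihy, L.map_add]
  | smul c x _ ih => rw [hq.map_smul, ih, L.map_smul, smul_eq_mul]

variable {ι : Type*} [Fintype ι] [DecidableEq ι] {a b : ι → V}

theorem eq_sum_mul_of_mem_span
    (hiso : ∀ x ∈ Submodule.span (ZMod 2) (Set.range a),
      ∀ y ∈ Submodule.span (ZMod 2) (Set.range a), ω x y = 0)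
    (hab : ∀ i j, ω (a i) (b j) = if i = j then 1 else 0)
    (hq : IsQuadraticRefinement ω q) {v : V} (hv : v ∈ Submodule.span (ZMod 2) (Set.range a)) :
    q v = ∑ i, q (a i) * ω v (b i) := by
  have hL : ∀ v, (∑ i, q (a i) • ω.flip (b i)) v = ∑ i, q (a i) * ω v (b i) := by
    intro v
    simp only [LinearMap.sum_apply, LinearMap.smul_apply, LinearMap.flip_apply,
      smul_eq_mul]
  rw [hq.eq_of_mem_span hiso _ ?_ v hv, hL]
  rintro _ ⟨j, rfl⟩
  simp only [hL, hab, mul_ite, mul_one, mul_zero, sum_ite_eq, mem_univ, if_true]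

theorem arfSum_add_pairing
    (hiso : ∀ x ∈ Submodule.span (ZMod 2) (Set.range a),
      ∀ y ∈ Submodule.span (ZMod 2) (Set.range a), ω x y = 0)
    (hab : ∀ i j, ω (a i) (b j) = if i = j then 1 else 0)
    (hq : IsQuadraticRefinement ω q) {v : V} (hv : v ∈ Submodule.span (ZMod 2) (Set.range a)) :
    arfSum a b (fun x => q x + ω v x) = arfSum a b q + q v := by
  have hva : ∀ i, ω v (a i) = 0 := fun i =>
    hiso v hv _ (Submodule.subset_span ⟨i, rfl⟩)
  simp only [arfSum, hva, add_zero, mul_add, sum_add_distrib,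
    hq.eq_sum_mul_of_mem_span hiso hab hv]

theorem arfSum_add_pairing_sub
    (hiso : ∀ x ∈ Submodule.span (ZMod 2) (Set.range a),
      ∀ y ∈ Submodule.span (ZMod 2) (Set.range a), ω x y = 0)
    (hab : ∀ i j, ω (a i) (b j) = if i = j then 1 else 0)
    (hq : IsQuadraticRefinement ω q) {v : V} (hv : v ∈ Submodule.span (ZMod 2) (Set.range a)) :
    arfSum a b (fun x => q x + ω v x) - arfSum a b q = q v := by
  rw [hq.arfSum_add_pairing hiso hab hv, add_sub_cancel_left]

end IsQuadraticRefinement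

end

theorem stmt_10_general (V : Type*) [AddCommGroup V] [Module (ZMod 2) V] (g : ℕ)
    (B : Module.Basis (Fin g ⊕ Fin g) (ZMod 2) V)
    (ω : V →ₗ[ZMod 2] V →ₗ[ZMod 2] ZMod 2)
    (hωab : ∀ i j, ω (B (Sum.inl i)) (B (Sum.inr j)) = if i = j then 1 else 0)
    (P : Submodule (ZMod 2) V)
    (hP : P = Submodule.span (ZMod 2) (Set.range fun i : Fin g => B (Sum.inl i)))
    (hLag : ∀ x ∈ P, ∀ y ∈ P, ω x y = 0) :
    -- arf(f·q) = arf(q) + q((f_*)^PD)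
    (∀ q : V → ZMod 2, (∀ x y, q (x + y) = q x + q y + ω x y) →
      ∀ v ∈ P,
        (∑ i : Fin g, (q (B (Sum.inl i)) + ω v (B (Sum.inl i))) *
            (q (B (Sum.inr i)) + ω v (B (Sum.inr i))))
          = (∑ i : Fin g, q (B (Sum.inl i)) * q (B (Sum.inr i))) + q v) ∧
    -- the difference arf(f·q) − arf(q) only depends on f and on w₁(q)
    (∀ q q' : V → ZMod 2,
      (∀ x y, q (x + y) = q x + q y + ω x y) →
      (∀ x y, q' (x + y) = q' x + q' y + ω x y) →
      (∃ w ∈ P, ∀ x, q' x = q x + ω w x) →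
      ∀ v ∈ P,
        (∑ i : Fin g, (q (B (Sum.inl i)) + ω v (B (Sum.inl i))) *
            (q (B (Sum.inr i)) + ω v (B (Sum.inr i))))
          - (∑ i : Fin g, q (B (Sum.inl i)) * q (B (Sum.inr i)))
        = (∑ i : Fin g, (q' (B (Sum.inl i)) + ω v (B (Sum.inl i))) *
            (q' (B (Sum.inr i)) + ω v (B (Sum.inr i))))
          - (∑ i : Fin g, q' (B (Sum.inl i)) * q' (B (Sum.inr i)))) := by
  subst hP
  refine ⟨fun q hq v hv => IsQuadraticRefinement.arfSum_add_pairing hLag hωab hq hv, ?_⟩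
  rintro q q' hq hq' ⟨w, hw, hq'q⟩ v hv
  have hq'v : q' v = q v := by rw [hq'q v, hLag w hw v hv, add_zero]
  exact (IsQuadraticRefinement.arfSum_add_pairing_sub hLag hωab hq hv).trans
    (hq'v.symm.trans (IsQuadraticRefinement.arfSum_add_pairing_sub hLag hωab hq' hv).symm)

theorem stmt_10 (V : Type*) [AddCommGroup V] [Module (ZMod 2) V] (g : ℕ)
    (B : Module.Basis (Fin g ⊕ Fin g) (ZMod 2) V)
    (ω : V →ₗ[ZMod 2] V →ₗ[ZMod 2] ZMod 2)
    (hωaa : ∀ i j, ω (B (Sum.inl i)) (B (Sum.inl j)) = 0)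
    (hωbb : ∀ i j, ω (B (Sum.inr i)) (B (Sum.inr j)) = 0)
    (hωab : ∀ i j, ω (B (Sum.inl i)) (B (Sum.inr j)) = if i = j then 1 else 0)
    (P : Submodule (ZMod 2) V)
    (hP : P = Submodule.span (ZMod 2) (Set.range fun i : Fin g => B (Sum.inl i)))
    (hLag : ∀ x ∈ P, ∀ y ∈ P, ω x y = 0) :
    -- arf(f·q) = arf(q) + q((f_*)^PD)
    (∀ q : V → ZMod 2, (∀ x y, q (x + y) = q x + q y + ω x y) →
      ∀ v ∈ P,
        (∑ i : Fin g, (q (B (Sum.inl i)) + ω v (B (Sum.inl i))) *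
            (q (B (Sum.inr i)) + ω v (B (Sum.inr i))))
          = (∑ i : Fin g, q (B (Sum.inl i)) * q (B (Sum.inr i))) + q v) ∧
    -- the difference arf(f·q) − arf(q) only depends on f and on w₁(q)
    (∀ q q' : V → ZMod 2,
      (∀ x y, q (x + y) = q x + q y + ω x y) →
      (∀ x y, q' (x + y) = q' x + q' y + ω x y) →
      (∃ w ∈ P, ∀ x, q' x = q x + ω w x) →
      ∀ v ∈ P,
        (∑ i : Fin g, (q (B (Sum.inl i)) + ω v (B (Sum.inl i))) *
            (q (B (Sum.inr i)) + ω v (B (Sum.inr i))))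
          - (∑ i : Fin g, q (B (Sum.inl i)) * q (B (Sum.inr i)))
        = (∑ i : Fin g, (q' (B (Sum.inl i)) + ω v (B (Sum.inl i))) *
            (q' (B (Sum.inr i)) + ω v (B (Sum.inr i))))
          - (∑ i : Fin g, q' (B (Sum.inl i)) * q' (B (Sum.inr i)))) :=
  stmt_10_general V g B ω hωab P hP hLag
end
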